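/- arXiv:math/9910105 — 3 statements merged into one kernel-verified Lean document; each statement's English description precedes it below -/
import Mathlib

section
/- In the polynomial ring ℂ[α,β,γ], the element γ³ belongs to the ideal I_Q generated by Q¹ = α³ + 5αβ + 4γ − 24α, Q² = α²β + β² + (4/3)αγ + 8α² + 16β + 64, and Q³ = α²γ + βγ + 8γ. (Equivalently, γ³ = 0 in the invariant part of the quantum cohomology ring of the moduli space of rank-2 odd-degree stable bundles over a genus-3 Riemann surface.) -/
/-!
Write `u = α² + β + 8`. The relations factor as `Q³ = γ u`, `Q² = (β + 8) u + (4/3) α γ` and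
`Q¹ = α (α² + 5β − 24) + 4γ`. Hence `γ Q² − (β + 8) Q³ = (4/3) α γ²`, so `α γ² ∈ I_Q`, and then
`γ² Q¹ − (α² + 5β − 24) α γ² = 4 γ³` gives `γ³ ∈ I_Q`.
-/

open MvPolynomial

/-- α, β, γ as the three variables of ℂ[α,β,γ]. -/
noncomputable def α : MvPolynomial (Fin 3) ℂ := X 0
noncomputable def β : MvPolynomial (Fin 3) ℂ := X 1
noncomputable def γ : MvPolynomial (Fin 3) ℂ := X 2

namespace Ideal

variable {R : Type*} [CommRing R] {I : Ideal R}

theorem mul_sq_mem_of_mul_mem_of_mul_add_mem {a c u v k : R} (hcu : c * u ∈ I) (hk : IsUnit k)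
    (h : u * v + k * (a * c) ∈ I) : a * c ^ 2 ∈ I := by
  have hk_mul : k * (a * c ^ 2) ∈ I := by
    convert I.sub_mem (I.mul_mem_left c h) (I.mul_mem_left v hcu) using 1
    ring
  exact (I.unit_mul_mem_iff_mem hk).1 hk_mul

theorem pow_three_mem_of_mul_sq_mem_of_mul_add_mem {a c p w : R} (hac : a * c ^ 2 ∈ I)
    (hw : IsUnit w) (h : a * p + w * c ∈ I) : c ^ 3 ∈ I := by
  have hw_mul : w * c ^ 3 ∈ I := by
    convert I.sub_mem (I.mul_mem_left (c ^ 2) h) (I.mul_mem_left p hac) using 1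
    ring
  exact (I.unit_mul_mem_iff_mem hw).1 hw_mul

end Ideal

/-- γ³ lies in the ideal of quantum relations
    (α³ + 5αβ + 4γ − 24α, α²β + β² + (4/3)αγ + 8α² + 16β + 64, α²γ + βγ + 8γ). -/
theorem gamma_cubed_mem_quantum_relations :
    γ ^ 3 ∈ Ideal.span ({α ^ 3 + 5 * α * β + 4 * γ - 24 * α,
      α ^ 2 * β + β ^ 2 + C ((4 : ℂ) / 3) * (α * γ) + 8 * α ^ 2 + 16 * β + 64,
      α ^ 2 * γ + β * γ + 8 * γ} : Set (MvPolynomial (Fin 3) ℂ)) := by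
  have h_four_thirds : IsUnit (C ((4 : ℂ) / 3) : MvPolynomial (Fin 3) ℂ) :=
    (IsUnit.mk0 _ (by norm_num)).map C
  have h_four : IsUnit (4 : MvPolynomial (Fin 3) ℂ) := by
    rw [← map_ofNat C 4]
    exact (IsUnit.mk0 _ (by norm_num)).map C
  refine Ideal.pow_three_mem_of_mul_sq_mem_of_mul_add_mem (a := α) (p := α ^ 2 + 5 * β - 24)
    (Ideal.mul_sq_mem_of_mul_mem_of_mul_add_mem (u := α ^ 2 + β + 8) (v := β + 8)
      ?Q₃ h_four_thirds ?Q₂) h_four ?Q₁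
  case Q₁ =>
    rw [show α * (α ^ 2 + 5 * β - 24) + 4 * γ = α ^ 3 + 5 * α * β + 4 * γ - 24 * α by ring]
    exact Ideal.subset_span (by simp)
  case Q₂ =>
    rw [show (α ^ 2 + β + 8) * (β + 8) + C ((4 : ℂ) / 3) * (α * γ) =
      α ^ 2 * β + β ^ 2 + C ((4 : ℂ) / 3) * (α * γ) + 8 * α ^ 2 + 16 * β + 64 by ring]
    exact Ideal.subset_span (by simp)
  case Q₃ =>
    rw [show γ * (α ^ 2 + β + 8) = α ^ 2 * γ + β * γ + 8 * γ by ring]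
    exact Ideal.subset_span (by simp)
end

section
/- In the polynomial ring ℂ[α,β,γ], the element γ²·(β² − 64) belongs to the ideal I_Q generated by Q¹ = α³ + 5αβ + 4γ − 24α, Q² = α²β + β² + (4/3)αγ + 8α² + 16β + 64, and Q³ = α²γ + βγ + 8γ. (Equivalently, γ²(β² − 64) = 0 in the invariant part of the quantum cohomology ring of the moduli space for genus 3.) -/
open MvPolynomial

/-! With `L = α² + β + 8` the last two relations read `Q² = (β + 8) L + (4/3) αγ` and `Q³ = γ L`.
Hence `γ Q² - (β + 8) Q³ = (4/3) αγ²`, so `αγ² ∈ I_Q`; then `γ Q³ - α · αγ² = γ² (β + 8) ∈ I_Q`,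
and multiplying by `β - 8` gives `γ² (β² - 64)`. -/

namespace Ideal

variable {R : Type*} [CommRing R] {I : Ideal R} {a b c d k : R}

theorem mul_sq_mem_of_mul_add_mem (hk : IsUnit k)
    (h₂ : (b + d) * (a ^ 2 + b + d) + k * (a * c) ∈ I) (h₃ : c * (a ^ 2 + b + d) ∈ I) :
    a * c ^ 2 ∈ I := by
  have hk_mem : k * (a * c ^ 2) ∈ I := by
    have h : k * (a * c ^ 2) = c * ((b + d) * (a ^ 2 + b + d) + k * (a * c)) -
        (b + d) * (c * (a ^ 2 + b + d)) := by ring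
    rw [h]
    exact I.sub_mem (I.mul_mem_left _ h₂) (I.mul_mem_left _ h₃)
  exact (I.unit_mul_mem_iff_mem hk).mp hk_mem

theorem sq_mul_sq_sub_sq_mem (hk : IsUnit k)
    (h₂ : (b + d) * (a ^ 2 + b + d) + k * (a * c) ∈ I) (h₃ : c * (a ^ 2 + b + d) ∈ I) :
    c ^ 2 * (b ^ 2 - d ^ 2) ∈ I := by
  have hac : a * c ^ 2 ∈ I := mul_sq_mem_of_mul_add_mem hk h₂ h₃
  have hbd : c ^ 2 * (b + d) ∈ I := by
    have h : c ^ 2 * (b + d) = c * (c * (a ^ 2 + b + d)) - a * (a * c ^ 2) := by ring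
    rw [h]
    exact I.sub_mem (I.mul_mem_left _ h₃) (I.mul_mem_left _ hac)
  have h : c ^ 2 * (b ^ 2 - d ^ 2) = (b - d) * (c ^ 2 * (b + d)) := by ring
  rw [h]
  exact I.mul_mem_left _ hbd

end Ideal

/-- γ²(β² − 64) lies in the ideal of quantum relations
    (α³ + 5αβ + 4γ − 24α, α²β + β² + (4/3)αγ + 8α² + 16β + 64, α²γ + βγ + 8γ). -/
theorem gamma_sq_mul_beta_sq_sub_64_mem_quantum_relations :
    γ ^ 2 * (β ^ 2 - 64) ∈ Ideal.span ({α ^ 3 + 5 * α * β + 4 * γ - 24 * α,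
      α ^ 2 * β + β ^ 2 + C ((4 : ℂ) / 3) * (α * γ) + 8 * α ^ 2 + 16 * β + 64,
      α ^ 2 * γ + β * γ + 8 * γ} : Set (MvPolynomial (Fin 3) ℂ)) := by
  have hk : IsUnit (C ((4 : ℂ) / 3) : MvPolynomial (Fin 3) ℂ) :=
    (isUnit_iff_ne_zero.mpr (by norm_num)).map C
  rw [show β ^ 2 - 64 = β ^ 2 - (8 : MvPolynomial (Fin 3) ℂ) ^ 2 by norm_num]
  refine Ideal.sq_mul_sq_sub_sq_mem (a := α) hk ?_ ?_
  · apply Ideal.subset_span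
    convert Set.mem_insert_of_mem _ (Set.mem_insert _ _) using 1
    ring
  · apply Ideal.subset_span
    convert Set.mem_insert_of_mem _ (Set.mem_insert_of_mem _ (Set.mem_singleton _)) using 1
    ring
end

section
/- The images in the quotient ring ℂ[α,β,γ]/I_C of the ten monomials α^a β^b γ^c with a + b + c ≤ 2 (namely 1, α, β, α², γ, αβ, β², αγ, βγ, γ²) form a basis of ℂ[α,β,γ]/I_C as a ℂ-vector space; in particular this quotient is 10-dimensional over ℂ. -/
open MvPolynomial

/-- The ideal of classical cohomology relations for genus 3. -/
noncomputable def IC : Ideal (MvPolynomial (Fin 3) ℂ) :=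
  Ideal.span {α ^ 3 + 5 * α * β + 4 * γ,
    α ^ 2 * β + β ^ 2 + C ((4 : ℂ) / 3) * (α * γ),
    α ^ 2 * γ + β * γ}

/-- The ten monomials α^a β^b γ^c with a+b+c ≤ 2, as elements of the quotient. -/
noncomputable def qBasis : Fin 10 → (MvPolynomial (Fin 3) ℂ ⧸ IC) := fun i =>
  Ideal.Quotient.mk IC
    (![1, α, β, α ^ 2, γ, α * β, β ^ 2, α * γ, β * γ, γ ^ 2] i)

abbrev R3 := MvPolynomial (Fin 3) ℂ

/-- exponent vector -/
noncomputable def ex (a b c : ℕ) : Fin 3 →₀ ℕ :=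
  Finsupp.single 0 a + Finsupp.single 1 b + Finsupp.single 2 c

lemma ex_apply0 (a b c : ℕ) : ex a b c 0 = a := by
  simp [ex, Finsupp.single_apply]
lemma ex_apply1 (a b c : ℕ) : ex a b c 1 = b := by
  simp [ex, Finsupp.single_apply]
lemma ex_apply2 (a b c : ℕ) : ex a b c 2 = c := by
  simp [ex, Finsupp.single_apply]

lemma ex_eq {a b c a' b' c' : ℕ} : ex a b c = ex a' b' c' ↔ (a = a' ∧ b = b' ∧ c = c') := by
  constructor
  · intro h
    refine ⟨?_, ?_, ?_⟩
    · have := DFunLike.congr_fun h 0; rwa [ex_apply0, ex_apply0] at this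
    · have := DFunLike.congr_fun h 1; rwa [ex_apply1, ex_apply1] at this
    · have := DFunLike.congr_fun h 2; rwa [ex_apply2, ex_apply2] at this
  · rintro ⟨rfl, rfl, rfl⟩; rfl

lemma mono_eq (a b c : ℕ) : (α ^ a * β ^ b * γ ^ c : R3) = monomial (ex a b c) 1 := by
  simp [α, β, γ, X_pow_eq_monomial, monomial_mul, ex]

/-- coefficient of a monomial -/
lemma cfm (a b c a' b' c' : ℕ) (r : ℂ) :
    coeff (ex a b c) (monomial (ex a' b' c') r : R3) =
      if a' = a ∧ b' = b ∧ c' = c then r else 0 := by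
  rw [coeff_monomial]
  simp [ex_eq]

lemma ex_succ0 (a b c : ℕ) : ex (a+1) b c = Finsupp.single 0 1 + ex a b c := by
  ext j; fin_cases j <;> simp [ex, Finsupp.single_apply] <;> omega
lemma ex_succ1 (a b c : ℕ) : ex a (b+1) c = Finsupp.single 1 1 + ex a b c := by
  ext j; fin_cases j <;> simp [ex, Finsupp.single_apply] <;> omega
lemma ex_succ2 (a b c : ℕ) : ex a b (c+1) = Finsupp.single 2 1 + ex a b c := by
  ext j; fin_cases j <;> simp [ex, Finsupp.single_apply] <;> omega

lemma coeff_X0 (a b c : ℕ) (p : R3) : coeff (ex (a+1) b c) (X 0 * p) = coeff (ex a b c) p := by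
  rw [ex_succ0]; exact coeff_X_mul _ _ _
lemma coeff_X1 (a b c : ℕ) (p : R3) : coeff (ex a (b+1) c) (X 1 * p) = coeff (ex a b c) p := by
  rw [ex_succ1]; exact coeff_X_mul _ _ _
lemma coeff_X2 (a b c : ℕ) (p : R3) : coeff (ex a b (c+1)) (X 2 * p) = coeff (ex a b c) p := by
  rw [ex_succ2]; exact coeff_X_mul _ _ _

lemma coeff_X0' (b c : ℕ) (p : R3) : coeff (ex 0 b c) (X 0 * p) = 0 := by
  rw [coeff_X_mul']; simp [Finsupp.mem_support_iff, ex_apply0]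
lemma coeff_X1' (a c : ℕ) (p : R3) : coeff (ex a 0 c) (X 1 * p) = 0 := by
  rw [coeff_X_mul']; simp [Finsupp.mem_support_iff, ex_apply1]
lemma coeff_X2' (a b : ℕ) (p : R3) : coeff (ex a b 0) (X 2 * p) = 0 := by
  rw [coeff_X_mul']; simp [Finsupp.mem_support_iff, ex_apply2]

/-- the ten dual functionals (Macaulay inverse system of IC) -/
noncomputable def lam (p : R3) : Fin 10 → ℂ := ![
  coeff (ex 0 0 0) p,
  coeff (ex 1 0 0) p,
  coeff (ex 0 1 0) p,
  coeff (ex 2 0 0) p,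
  coeff (ex 0 0 1) p - 4 * coeff (ex 3 0 0) p,
  coeff (ex 1 1 0) p - 5 * coeff (ex 3 0 0) p,
  coeff (ex 0 2 0) p - coeff (ex 2 1 0) p + 5 * coeff (ex 4 0 0) p,
  coeff (ex 1 0 1) p - (4/3) * coeff (ex 2 1 0) p + (8/3) * coeff (ex 4 0 0) p,
  coeff (ex 0 1 1) p - (4/3) * coeff (ex 1 2 0) p - coeff (ex 2 0 1) p
    + (8/3) * coeff (ex 3 1 0) p - (28/3) * coeff (ex 5 0 0) p,
  coeff (ex 0 0 2) p - coeff (ex 1 1 1) p + (4/3) * coeff (ex 2 2 0) p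
    + coeff (ex 3 0 1) p - (8/3) * coeff (ex 4 1 0) p + (28/3) * coeff (ex 6 0 0) p ]


lemma coeffX0 (a b c : ℕ) (p : R3) :
    coeff (ex a b c) (X 0 * p) = if a = 0 then 0 else coeff (ex (a-1) b c) p := by
  cases a with
  | zero => simp [coeff_X0']
  | succ n => simpa using coeff_X0 n b c p

lemma coeffX1 (a b c : ℕ) (p : R3) :
    coeff (ex a b c) (X 1 * p) = if b = 0 then 0 else coeff (ex a (b-1) c) p := by
  cases b with
  | zero => simp [coeff_X1']
  | succ n => simpa using coeff_X1 a n c p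

lemma coeffX2 (a b c : ℕ) (p : R3) :
    coeff (ex a b c) (X 2 * p) = if c = 0 then 0 else coeff (ex a b (c-1)) p := by
  cases c with
  | zero => simp [coeff_X2']
  | succ n => simpa using coeff_X2 a b n p


lemma lam_unfold (p : R3) : lam p = 0 ↔
    (coeff (ex 0 0 0) p = 0 ∧ coeff (ex 1 0 0) p = 0 ∧ coeff (ex 0 1 0) p = 0 ∧
     coeff (ex 2 0 0) p = 0 ∧
     coeff (ex 0 0 1) p - 4 * coeff (ex 3 0 0) p = 0 ∧
     coeff (ex 1 1 0) p - 5 * coeff (ex 3 0 0) p = 0 ∧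
     coeff (ex 0 2 0) p - coeff (ex 2 1 0) p + 5 * coeff (ex 4 0 0) p = 0 ∧
     coeff (ex 1 0 1) p - (4/3) * coeff (ex 2 1 0) p + (8/3) * coeff (ex 4 0 0) p = 0 ∧
     (coeff (ex 0 1 1) p - (4/3) * coeff (ex 1 2 0) p - coeff (ex 2 0 1) p
       + (8/3) * coeff (ex 3 1 0) p - (28/3) * coeff (ex 5 0 0) p = 0) ∧
     (coeff (ex 0 0 2) p - coeff (ex 1 1 1) p + (4/3) * coeff (ex 2 2 0) p
       + coeff (ex 3 0 1) p - (8/3) * coeff (ex 4 1 0) p + (28/3) * coeff (ex 6 0 0) p = 0)) := by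
  rw [funext_iff]
  simp only [lam, Fin.forall_fin_succ, IsEmpty.forall_iff, Matrix.cons_val_zero,
    Matrix.cons_val_succ, Pi.zero_apply, and_true]


lemma lam_X0 (p : R3) (h : lam p = 0) : lam (X 0 * p) = 0 := by
  rw [lam_unfold] at h ⊢
  obtain ⟨h0, h1, h2, h3, h4, h5, h6, h7, h8, h9⟩ := h
  simp only [coeffX0]
  norm_num
  refine ⟨h0, h1, h3, ?_, ?_, ?_, ?_, ?_⟩
  · linear_combination h2 - 5 * h3
  · linear_combination -h5
  · linear_combination h4 - (4/3) * h5
  · linear_combination -(4/3) * h6 - h7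
  · linear_combination -h8

lemma lam_X1 (p : R3) (h : lam p = 0) : lam (X 1 * p) = 0 := by
  rw [lam_unfold] at h ⊢
  obtain ⟨h0, h1, h2, h3, h4, h5, h6, h7, h8, h9⟩ := h
  simp only [coeffX1]
  norm_num
  refine ⟨h0, h1, ?_, h3, ?_, ?_⟩
  · linear_combination h2 - h3
  · linear_combination h4 - (4/3) * h5
  · linear_combination -h7

lemma lam_X2 (p : R3) (h : lam p = 0) : lam (X 2 * p) = 0 := by
  rw [lam_unfold] at h ⊢
  obtain ⟨h0, h1, h2, h3, h4, h5, h6, h7, h8, h9⟩ := h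
  simp only [coeffX2]
  norm_num
  refine ⟨h0, h1, ?_, ?_⟩
  · linear_combination h2 - h3
  · linear_combination h4 - h5

lemma mono_eq' (a b c : ℕ) (r : ℂ) :
    (monomial (ex a b c) r : R3) = C r * (α ^ a * β ^ b * γ ^ c) := by
  rw [mono_eq, C_mul_monomial, mul_one]

lemma lam_add {x y : R3} (hx : lam x = 0) (hy : lam y = 0) : lam (x + y) = 0 := by
  rw [lam_unfold] at hx hy ⊢
  obtain ⟨a0,a1,a2,a3,a4,a5,a6,a7,a8,a9⟩ := hx
  obtain ⟨b0,b1,b2,b3,b4,b5,b6,b7,b8,b9⟩ := hy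
  simp only [coeff_add]
  exact ⟨by linear_combination a0+b0, by linear_combination a1+b1, by linear_combination a2+b2,
    by linear_combination a3+b3, by linear_combination a4+b4, by linear_combination a5+b5,
    by linear_combination a6+b6, by linear_combination a7+b7, by linear_combination a8+b8,
    by linear_combination a9+b9⟩

lemma lam_C (a : ℂ) {x : R3} (hx : lam x = 0) : lam (C a * x) = 0 := by
  rw [lam_unfold] at hx ⊢
  obtain ⟨h0,h1,h2,h3,h4,h5,h6,h7,h8,h9⟩ := hx
  simp only [coeff_C_mul]
  exact ⟨by linear_combination a*h0, by linear_combination a*h1, by linear_combination a*h2,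
    by linear_combination a*h3, by linear_combination a*h4, by linear_combination a*h5,
    by linear_combination a*h6, by linear_combination a*h7, by linear_combination a*h8,
    by linear_combination a*h9⟩

lemma lam_mul (r : R3) {x : R3} (hx : lam x = 0) : lam (r * x) = 0 := by
  induction r using MvPolynomial.induction_on generalizing x with
  | C a => exact lam_C a hx
  | add p q hp hq => rw [add_mul]; exact lam_add (hp hx) (hq hx)
  | mul_X p i hp =>
      rw [mul_assoc]
      refine hp ?_
      fin_cases i
      · exact lam_X0 x hx
      · exact lam_X1 x hx
      · exact lam_X2 x hx

lemma lam_q1 : lam (α ^ 3 + 5 * α * β + 4 * γ) = 0 := by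
  have e : α ^ 3 + 5 * α * β + 4 * γ
      = monomial (ex 3 0 0) (1:ℂ) + monomial (ex 1 1 0) 5 + monomial (ex 0 0 1) 4 := by
    simp only [mono_eq', map_ofNat, map_one]; ring
  rw [lam_unfold, e]
  norm_num [coeff_add, cfm, ex_eq]

lemma lam_q2 : lam (α ^ 2 * β + β ^ 2 + C ((4:ℂ)/3) * (α * γ)) = 0 := by
  have e : α ^ 2 * β + β ^ 2 + C ((4:ℂ)/3) * (α * γ)
      = monomial (ex 2 1 0) (1:ℂ) + monomial (ex 0 2 0) 1 + monomial (ex 1 0 1) (4/3) := by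
    simp only [mono_eq', map_ofNat, map_one]; ring
  rw [lam_unfold, e]
  norm_num [coeff_add, cfm, ex_eq]

lemma lam_q3 : lam (α ^ 2 * γ + β * γ) = 0 := by
  have e : α ^ 2 * γ + β * γ = monomial (ex 2 0 1) (1:ℂ) + monomial (ex 0 1 1) 1 := by
    simp only [mono_eq', map_ofNat, map_one]; ring
  rw [lam_unfold, e]
  norm_num [coeff_add, cfm, ex_eq]

lemma lam_zero : lam (0 : R3) = 0 := by
  rw [lam_unfold]; norm_num

lemma lam_mem {p : R3} (hp : p ∈ IC) : lam p = 0 := by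
  refine Submodule.span_induction ?_ lam_zero (fun x y _ _ hx hy => lam_add hx hy)
    (fun a x _ hx => lam_mul a hx) hp
  intro x hx
  rcases hx with h | h | h
  · rw [h]; exact lam_q1
  · rw [h]; exact lam_q2
  · rw [h]; exact lam_q3


lemma sum_univ_ten {M : Type*} [AddCommMonoid M] (f : Fin 10 → M) :
    ∑ i, f i = f 0 + f 1 + f 2 + f 3 + f 4 + f 5 + f 6 + f 7 + f 8 + f 9 := by
  rw [Fin.sum_univ_castSucc, Fin.sum_univ_castSucc, Fin.sum_univ_eight]
  rfl

lemma mk_smul (c : ℂ) (x : R3) :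
    Ideal.Quotient.mk IC (C c * x) = c • Ideal.Quotient.mk IC x := by
  rw [← MvPolynomial.smul_eq_C_mul]
  exact Submodule.Quotient.mk_smul IC c x

lemma indep : LinearIndependent ℂ qBasis := by
  rw [Fintype.linearIndependent_iff]
  intro g hg
  have e : (C (g 0) * 1 + C (g 1) * α + C (g 2) * β + C (g 3) * α ^ 2 + C (g 4) * γ
        + C (g 5) * (α * β) + C (g 6) * β ^ 2 + C (g 7) * (α * γ) + C (g 8) * (β * γ)
        + C (g 9) * γ ^ 2 : R3)
      = monomial (ex 0 0 0) (g 0) + monomial (ex 1 0 0) (g 1) + monomial (ex 0 1 0) (g 2)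
        + monomial (ex 2 0 0) (g 3) + monomial (ex 0 0 1) (g 4) + monomial (ex 1 1 0) (g 5)
        + monomial (ex 0 2 0) (g 6) + monomial (ex 1 0 1) (g 7) + monomial (ex 0 1 1) (g 8)
        + monomial (ex 0 0 2) (g 9) := by
    simp only [mono_eq']
    ring
  have hmem : (C (g 0) * 1 + C (g 1) * α + C (g 2) * β + C (g 3) * α ^ 2 + C (g 4) * γ
        + C (g 5) * (α * β) + C (g 6) * β ^ 2 + C (g 7) * (α * γ) + C (g 8) * (β * γ)
        + C (g 9) * γ ^ 2 : R3) ∈ IC := by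
    rw [← Ideal.Quotient.eq_zero_iff_mem, ← hg, sum_univ_ten]
    simp only [map_add, mk_smul]
    rfl
  have h := lam_mem hmem
  rw [e, lam_unfold] at h
  norm_num [coeff_add, cfm, ex_eq] at h
  obtain ⟨h0, h1, h2, h3, h4, h5, h6, h7, h8, h9⟩ := h
  intro i
  fin_cases i <;> assumption

-- generators of IC
lemma hq1 : (α ^ 3 + 5 * α * β + 4 * γ : R3) ∈ IC :=
  Ideal.subset_span (Set.mem_insert _ _)
lemma hq2 : (α ^ 2 * β + β ^ 2 + C ((4 : ℂ) / 3) * (α * γ) : R3) ∈ IC :=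
  Ideal.subset_span (Set.mem_insert_of_mem _ (Set.mem_insert _ _))
lemma hq3 : (α ^ 2 * γ + β * γ : R3) ∈ IC :=
  Ideal.subset_span (Set.mem_insert_of_mem _ (Set.mem_insert_of_mem _ rfl))

lemma hC3 : ((3 : R3) * C ((4 : ℂ) / 3)) = 4 := by
  rw [show (3 : R3) = C (3 : ℂ) from (map_ofNat C 3).symm, ← C_mul,
    show (3 : ℂ) * (4 / 3) = 4 by norm_num, map_ofNat]

/-- integer-coefficient version of q2 -/
lemma hp2 : (3 * α ^ 2 * β + 3 * β ^ 2 + 4 * (α * γ) : R3) ∈ IC := by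
  have e : (3 * α ^ 2 * β + 3 * β ^ 2 + 4 * (α * γ) : R3)
      = 3 * (α ^ 2 * β + β ^ 2 + C ((4 : ℂ) / 3) * (α * γ)) := by
    linear_combination (-(α * γ)) * hC3
  rw [e]; exact IC.mul_mem_left _ hq2

lemma mem_cancel (n : ℕ) (hn : (n : ℂ) ≠ 0) {t : R3} (h : (n : R3) * t ∈ IC) : t ∈ IC := by
  have e : t = C ((n : ℂ)⁻¹) * ((n : R3) * t) := by
    rw [← mul_assoc, show ((n : R3)) = C ((n : ℂ)) from (map_natCast C n).symm, ← C_mul,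
      inv_mul_cancel₀ hn, C_1, one_mul]
  rw [e]; exact IC.mul_mem_left _ h

lemma mem4 {t : R3} (h : 4 * t ∈ IC) : t ∈ IC := by
  refine mem_cancel 4 (by norm_num) ?_
  rwa [show ((4:ℕ) : R3) = 4 by norm_num]
lemma mem12 {t : R3} (h : 12 * t ∈ IC) : t ∈ IC := by
  refine mem_cancel 12 (by norm_num) ?_
  rwa [show ((12:ℕ) : R3) = 12 by norm_num]
lemma mem16 {t : R3} (h : 16 * t ∈ IC) : t ∈ IC := by
  refine mem_cancel 16 (by norm_num) ?_
  rwa [show ((16:ℕ) : R3) = 16 by norm_num]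

-- cubic reduction relations, as ideal memberships
lemma m_ab2 : (α * β ^ 2 + C ((4:ℂ)/3) * (β * γ) : R3) ∈ IC := by
  refine mem12 ?_
  have e : (12 : R3) * (α * β ^ 2 + C ((4:ℂ)/3) * (β * γ))
      = (3 * β) * (α ^ 3 + 5 * α * β + 4 * γ)
        + (-α) * (3 * α ^ 2 * β + 3 * β ^ 2 + 4 * (α * γ))
        + 4 * (α ^ 2 * γ + β * γ) := by
    linear_combination (4 * (β * γ)) * hC3
  rw [e]
  exact IC.add_mem (IC.add_mem (IC.mul_mem_left _ hq1) (IC.mul_mem_left _ hp2))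
    (IC.mul_mem_left _ hq3)

lemma m_abg : (α * β * γ + γ ^ 2 : R3) ∈ IC := by
  refine mem4 ?_
  have e : (4 : R3) * (α * β * γ + γ ^ 2)
      = γ * (α ^ 3 + 5 * α * β + 4 * γ) + (-α) * (α ^ 2 * γ + β * γ) := by ring
  rw [e]
  exact IC.add_mem (IC.mul_mem_left _ hq1) (IC.mul_mem_left _ hq3)

lemma m_ag2 : (α * γ ^ 2 : R3) ∈ IC := by
  refine mem4 ?_
  have e : (4 : R3) * (α * γ ^ 2)
      = γ * (3 * α ^ 2 * β + 3 * β ^ 2 + 4 * (α * γ)) + (-3 * β) * (α ^ 2 * γ + β * γ) := by ring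
  rw [e]
  exact IC.add_mem (IC.mul_mem_left _ hp2) (IC.mul_mem_left _ hq3)

lemma m_b3 : (β ^ 3 : R3) ∈ IC := by
  refine mem12 ?_
  have e : (12 : R3) * β ^ 3
      = (-3 * α * β) * (α ^ 3 + 5 * α * β + 4 * γ)
        + (4 * β + α ^ 2) * (3 * α ^ 2 * β + 3 * β ^ 2 + 4 * (α * γ))
        + (-4 * α) * (α ^ 2 * γ + β * γ) := by ring
  rw [e]
  exact IC.add_mem (IC.add_mem (IC.mul_mem_left _ hq1) (IC.mul_mem_left _ hp2))
    (IC.mul_mem_left _ hq3)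

lemma m_b2g : (β ^ 2 * γ : R3) ∈ IC := by
  refine mem4 ?_
  have e : (4 : R3) * (β ^ 2 * γ)
      = (-(α * γ)) * (α ^ 3 + 5 * α * β + 4 * γ)
        + γ * (3 * α ^ 2 * β + 3 * β ^ 2 + 4 * (α * γ))
        + (β + α ^ 2) * (α ^ 2 * γ + β * γ) := by ring
  rw [e]
  exact IC.add_mem (IC.add_mem (IC.mul_mem_left _ hq1) (IC.mul_mem_left _ hp2))
    (IC.mul_mem_left _ hq3)

lemma m_bg2 : (β * γ ^ 2 : R3) ∈ IC := by
  refine mem4 ?_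
  have e : (4 : R3) * (β * γ ^ 2)
      = (-(α * γ)) * (3 * α ^ 2 * β + 3 * β ^ 2 + 4 * (α * γ))
        + (4 * γ + 3 * (α * β)) * (α ^ 2 * γ + β * γ) := by ring
  rw [e]
  exact IC.add_mem (IC.mul_mem_left _ hp2) (IC.mul_mem_left _ hq3)

lemma m_g3 : (γ ^ 3 : R3) ∈ IC := by
  refine mem16 ?_
  have e : (16 : R3) * γ ^ 3
      = (4 * γ ^ 2) * (α ^ 3 + 5 * α * β + 4 * γ)
        + (-(α ^ 2 * γ + 5 * (β * γ))) * (3 * α ^ 2 * β + 3 * β ^ 2 + 4 * (α * γ))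
        + (3 * (α ^ 2 * β) + 15 * β ^ 2) * (α ^ 2 * γ + β * γ) := by ring
  rw [e]
  exact IC.add_mem (IC.add_mem (IC.mul_mem_left _ hq1) (IC.mul_mem_left _ hp2))
    (IC.mul_mem_left _ hq3)

-- quotient relations
lemma r_a3 : Ideal.Quotient.mk IC (α ^ 3) = (-5:ℂ) • qBasis 5 + (-4:ℂ) • qBasis 4 := by
  rw [show qBasis 5 = Ideal.Quotient.mk IC (α * β) from rfl,
    show qBasis 4 = Ideal.Quotient.mk IC γ from rfl, ← mk_smul, ← mk_smul, ← map_add,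
    Ideal.Quotient.eq]
  have e : α ^ 3 - (C (-5:ℂ) * (α * β) + C (-4:ℂ) * γ) = α ^ 3 + 5 * α * β + 4 * γ := by
    simp only [map_neg, map_ofNat]; ring
  rw [e]; exact hq1

lemma r_a2b : Ideal.Quotient.mk IC (α ^ 2 * β) = (-1:ℂ) • qBasis 6 + (-(4/3):ℂ) • qBasis 7 := by
  rw [show qBasis 6 = Ideal.Quotient.mk IC (β ^ 2) from rfl,
    show qBasis 7 = Ideal.Quotient.mk IC (α * γ) from rfl, ← mk_smul, ← mk_smul, ← map_add,
    Ideal.Quotient.eq]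
  have e : α ^ 2 * β - (C (-1:ℂ) * β ^ 2 + C (-(4/3):ℂ) * (α * γ))
      = α ^ 2 * β + β ^ 2 + C ((4:ℂ)/3) * (α * γ) := by
    simp only [map_neg, map_one]; ring
  rw [e]; exact hq2

lemma r_a2g : Ideal.Quotient.mk IC (α ^ 2 * γ) = (-1:ℂ) • qBasis 8 := by
  rw [show qBasis 8 = Ideal.Quotient.mk IC (β * γ) from rfl, ← mk_smul, Ideal.Quotient.eq]
  have e : α ^ 2 * γ - C (-1:ℂ) * (β * γ) = α ^ 2 * γ + β * γ := by
    simp only [map_neg, map_one]; ring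
  rw [e]; exact hq3

lemma r_ab2 : Ideal.Quotient.mk IC (α * β ^ 2) = (-(4/3):ℂ) • qBasis 8 := by
  rw [show qBasis 8 = Ideal.Quotient.mk IC (β * γ) from rfl, ← mk_smul, Ideal.Quotient.eq]
  have e : α * β ^ 2 - C (-(4/3):ℂ) * (β * γ) = α * β ^ 2 + C ((4:ℂ)/3) * (β * γ) := by
    simp only [map_neg]; ring
  rw [e]; exact m_ab2

lemma r_abg : Ideal.Quotient.mk IC (α * β * γ) = (-1:ℂ) • qBasis 9 := by
  rw [show qBasis 9 = Ideal.Quotient.mk IC (γ ^ 2) from rfl, ← mk_smul, Ideal.Quotient.eq]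
  have e : α * β * γ - C (-1:ℂ) * γ ^ 2 = α * β * γ + γ ^ 2 := by
    simp only [map_neg, map_one]; ring
  rw [e]; exact m_abg

lemma z_ag2 : Ideal.Quotient.mk IC (α * γ ^ 2) = 0 := Ideal.Quotient.eq_zero_iff_mem.mpr m_ag2
lemma z_b3 : Ideal.Quotient.mk IC (β ^ 3) = 0 := Ideal.Quotient.eq_zero_iff_mem.mpr m_b3
lemma z_b2g : Ideal.Quotient.mk IC (β ^ 2 * γ) = 0 := Ideal.Quotient.eq_zero_iff_mem.mpr m_b2g
lemma z_bg2 : Ideal.Quotient.mk IC (β * γ ^ 2) = 0 := Ideal.Quotient.eq_zero_iff_mem.mpr m_bg2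
lemma z_g3 : Ideal.Quotient.mk IC (γ ^ 3) = 0 := Ideal.Quotient.eq_zero_iff_mem.mpr m_g3

lemma closure0 : ∀ x ∈ Submodule.span ℂ (Set.range qBasis),
    x * Ideal.Quotient.mk IC α ∈ Submodule.span ℂ (Set.range qBasis) := by
  intro x hx
  refine Submodule.span_induction ?_ (by rw [zero_mul]; exact Submodule.zero_mem _)
    (fun a b _ _ ha hb => by rw [add_mul]; exact Submodule.add_mem _ ha hb)
    (fun c a _ ha => by rw [smul_mul_assoc]; exact Submodule.smul_mem _ _ ha) hx
  rintro y ⟨j, rfl⟩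
  fin_cases j
  · show qBasis 0 * Ideal.Quotient.mk IC α ∈ _
    have e : qBasis 0 * Ideal.Quotient.mk IC α = qBasis 1 := by
      rw [show qBasis 0 = Ideal.Quotient.mk IC (1) from rfl,
        show qBasis 1 = Ideal.Quotient.mk IC (α) from rfl, ← map_mul]
      try exact congrArg _ (by ring)
    rw [e]; exact Submodule.subset_span (Set.mem_range_self _)
  · show qBasis 1 * Ideal.Quotient.mk IC α ∈ _
    have e : qBasis 1 * Ideal.Quotient.mk IC α = qBasis 3 := by
      rw [show qBasis 1 = Ideal.Quotient.mk IC (α) from rfl,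
        show qBasis 3 = Ideal.Quotient.mk IC (α ^ 2) from rfl, ← map_mul]
      try exact congrArg _ (by ring)
    rw [e]; exact Submodule.subset_span (Set.mem_range_self _)
  · show qBasis 2 * Ideal.Quotient.mk IC α ∈ _
    have e : qBasis 2 * Ideal.Quotient.mk IC α = qBasis 5 := by
      rw [show qBasis 2 = Ideal.Quotient.mk IC (β) from rfl,
        show qBasis 5 = Ideal.Quotient.mk IC (α * β) from rfl, ← map_mul]
      try exact congrArg _ (by ring)
    rw [e]; exact Submodule.subset_span (Set.mem_range_self _)
  · show qBasis 3 * Ideal.Quotient.mk IC α ∈ _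
    have e : qBasis 3 * Ideal.Quotient.mk IC α = Ideal.Quotient.mk IC (α ^ 3) := by
      rw [show qBasis 3 = Ideal.Quotient.mk IC (α ^ 2) from rfl, ← map_mul]
      try exact congrArg _ (by ring)
    rw [e, r_a3]; exact add_mem (Submodule.smul_mem _ _ (Submodule.subset_span (Set.mem_range_self 5))) (Submodule.smul_mem _ _ (Submodule.subset_span (Set.mem_range_self 4)))
  · show qBasis 4 * Ideal.Quotient.mk IC α ∈ _
    have e : qBasis 4 * Ideal.Quotient.mk IC α = qBasis 7 := by
      rw [show qBasis 4 = Ideal.Quotient.mk IC (γ) from rfl,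
        show qBasis 7 = Ideal.Quotient.mk IC (α * γ) from rfl, ← map_mul]
      try exact congrArg _ (by ring)
    rw [e]; exact Submodule.subset_span (Set.mem_range_self _)
  · show qBasis 5 * Ideal.Quotient.mk IC α ∈ _
    have e : qBasis 5 * Ideal.Quotient.mk IC α = Ideal.Quotient.mk IC (α ^ 2 * β) := by
      rw [show qBasis 5 = Ideal.Quotient.mk IC (α * β) from rfl, ← map_mul]
      try exact congrArg _ (by ring)
    rw [e, r_a2b]; exact add_mem (Submodule.smul_mem _ _ (Submodule.subset_span (Set.mem_range_self 6))) (Submodule.smul_mem _ _ (Submodule.subset_span (Set.mem_range_self 7)))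
  · show qBasis 6 * Ideal.Quotient.mk IC α ∈ _
    have e : qBasis 6 * Ideal.Quotient.mk IC α = Ideal.Quotient.mk IC (α * β ^ 2) := by
      rw [show qBasis 6 = Ideal.Quotient.mk IC (β ^ 2) from rfl, ← map_mul]
      try exact congrArg _ (by ring)
    rw [e, r_ab2]; exact (Submodule.smul_mem _ _ (Submodule.subset_span (Set.mem_range_self 8)))
  · show qBasis 7 * Ideal.Quotient.mk IC α ∈ _
    have e : qBasis 7 * Ideal.Quotient.mk IC α = Ideal.Quotient.mk IC (α ^ 2 * γ) := by
      rw [show qBasis 7 = Ideal.Quotient.mk IC (α * γ) from rfl, ← map_mul]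
      try exact congrArg _ (by ring)
    rw [e, r_a2g]; exact (Submodule.smul_mem _ _ (Submodule.subset_span (Set.mem_range_self 8)))
  · show qBasis 8 * Ideal.Quotient.mk IC α ∈ _
    have e : qBasis 8 * Ideal.Quotient.mk IC α = Ideal.Quotient.mk IC (α * β * γ) := by
      rw [show qBasis 8 = Ideal.Quotient.mk IC (β * γ) from rfl, ← map_mul]
      try exact congrArg _ (by ring)
    rw [e, r_abg]; exact (Submodule.smul_mem _ _ (Submodule.subset_span (Set.mem_range_self 9)))
  · show qBasis 9 * Ideal.Quotient.mk IC α ∈ _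
    have e : qBasis 9 * Ideal.Quotient.mk IC α = Ideal.Quotient.mk IC (α * γ ^ 2) := by
      rw [show qBasis 9 = Ideal.Quotient.mk IC (γ ^ 2) from rfl, ← map_mul]
      try exact congrArg _ (by ring)
    rw [e, z_ag2]; exact Submodule.zero_mem _

lemma closure1 : ∀ x ∈ Submodule.span ℂ (Set.range qBasis),
    x * Ideal.Quotient.mk IC β ∈ Submodule.span ℂ (Set.range qBasis) := by
  intro x hx
  refine Submodule.span_induction ?_ (by rw [zero_mul]; exact Submodule.zero_mem _)
    (fun a b _ _ ha hb => by rw [add_mul]; exact Submodule.add_mem _ ha hb)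
    (fun c a _ ha => by rw [smul_mul_assoc]; exact Submodule.smul_mem _ _ ha) hx
  rintro y ⟨j, rfl⟩
  fin_cases j
  · show qBasis 0 * Ideal.Quotient.mk IC β ∈ _
    have e : qBasis 0 * Ideal.Quotient.mk IC β = qBasis 2 := by
      rw [show qBasis 0 = Ideal.Quotient.mk IC (1) from rfl,
        show qBasis 2 = Ideal.Quotient.mk IC (β) from rfl, ← map_mul]
      try exact congrArg _ (by ring)
    rw [e]; exact Submodule.subset_span (Set.mem_range_self _)
  · show qBasis 1 * Ideal.Quotient.mk IC β ∈ _
    have e : qBasis 1 * Ideal.Quotient.mk IC β = qBasis 5 := by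
      rw [show qBasis 1 = Ideal.Quotient.mk IC (α) from rfl,
        show qBasis 5 = Ideal.Quotient.mk IC (α * β) from rfl, ← map_mul]
      try exact congrArg _ (by ring)
    rw [e]; exact Submodule.subset_span (Set.mem_range_self _)
  · show qBasis 2 * Ideal.Quotient.mk IC β ∈ _
    have e : qBasis 2 * Ideal.Quotient.mk IC β = qBasis 6 := by
      rw [show qBasis 2 = Ideal.Quotient.mk IC (β) from rfl,
        show qBasis 6 = Ideal.Quotient.mk IC (β ^ 2) from rfl, ← map_mul]
      try exact congrArg _ (by ring)
    rw [e]; exact Submodule.subset_span (Set.mem_range_self _)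
  · show qBasis 3 * Ideal.Quotient.mk IC β ∈ _
    have e : qBasis 3 * Ideal.Quotient.mk IC β = Ideal.Quotient.mk IC (α ^ 2 * β) := by
      rw [show qBasis 3 = Ideal.Quotient.mk IC (α ^ 2) from rfl, ← map_mul]
      try exact congrArg _ (by ring)
    rw [e, r_a2b]; exact add_mem (Submodule.smul_mem _ _ (Submodule.subset_span (Set.mem_range_self 6))) (Submodule.smul_mem _ _ (Submodule.subset_span (Set.mem_range_self 7)))
  · show qBasis 4 * Ideal.Quotient.mk IC β ∈ _
    have e : qBasis 4 * Ideal.Quotient.mk IC β = qBasis 8 := by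
      rw [show qBasis 4 = Ideal.Quotient.mk IC (γ) from rfl,
        show qBasis 8 = Ideal.Quotient.mk IC (β * γ) from rfl, ← map_mul]
      try exact congrArg _ (by ring)
    rw [e]; exact Submodule.subset_span (Set.mem_range_self _)
  · show qBasis 5 * Ideal.Quotient.mk IC β ∈ _
    have e : qBasis 5 * Ideal.Quotient.mk IC β = Ideal.Quotient.mk IC (α * β ^ 2) := by
      rw [show qBasis 5 = Ideal.Quotient.mk IC (α * β) from rfl, ← map_mul]
      try exact congrArg _ (by ring)
    rw [e, r_ab2]; exact (Submodule.smul_mem _ _ (Submodule.subset_span (Set.mem_range_self 8)))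
  · show qBasis 6 * Ideal.Quotient.mk IC β ∈ _
    have e : qBasis 6 * Ideal.Quotient.mk IC β = Ideal.Quotient.mk IC (β ^ 3) := by
      rw [show qBasis 6 = Ideal.Quotient.mk IC (β ^ 2) from rfl, ← map_mul]
      try exact congrArg _ (by ring)
    rw [e, z_b3]; exact Submodule.zero_mem _
  · show qBasis 7 * Ideal.Quotient.mk IC β ∈ _
    have e : qBasis 7 * Ideal.Quotient.mk IC β = Ideal.Quotient.mk IC (α * β * γ) := by
      rw [show qBasis 7 = Ideal.Quotient.mk IC (α * γ) from rfl, ← map_mul]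
      try exact congrArg _ (by ring)
    rw [e, r_abg]; exact (Submodule.smul_mem _ _ (Submodule.subset_span (Set.mem_range_self 9)))
  · show qBasis 8 * Ideal.Quotient.mk IC β ∈ _
    have e : qBasis 8 * Ideal.Quotient.mk IC β = Ideal.Quotient.mk IC (β ^ 2 * γ) := by
      rw [show qBasis 8 = Ideal.Quotient.mk IC (β * γ) from rfl, ← map_mul]
      try exact congrArg _ (by ring)
    rw [e, z_b2g]; exact Submodule.zero_mem _
  · show qBasis 9 * Ideal.Quotient.mk IC β ∈ _
    have e : qBasis 9 * Ideal.Quotient.mk IC β = Ideal.Quotient.mk IC (β * γ ^ 2) := by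
      rw [show qBasis 9 = Ideal.Quotient.mk IC (γ ^ 2) from rfl, ← map_mul]
      try exact congrArg _ (by ring)
    rw [e, z_bg2]; exact Submodule.zero_mem _

lemma closure2 : ∀ x ∈ Submodule.span ℂ (Set.range qBasis),
    x * Ideal.Quotient.mk IC γ ∈ Submodule.span ℂ (Set.range qBasis) := by
  intro x hx
  refine Submodule.span_induction ?_ (by rw [zero_mul]; exact Submodule.zero_mem _)
    (fun a b _ _ ha hb => by rw [add_mul]; exact Submodule.add_mem _ ha hb)
    (fun c a _ ha => by rw [smul_mul_assoc]; exact Submodule.smul_mem _ _ ha) hx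
  rintro y ⟨j, rfl⟩
  fin_cases j
  · show qBasis 0 * Ideal.Quotient.mk IC γ ∈ _
    have e : qBasis 0 * Ideal.Quotient.mk IC γ = qBasis 4 := by
      rw [show qBasis 0 = Ideal.Quotient.mk IC (1) from rfl,
        show qBasis 4 = Ideal.Quotient.mk IC (γ) from rfl, ← map_mul]
      try exact congrArg _ (by ring)
    rw [e]; exact Submodule.subset_span (Set.mem_range_self _)
  · show qBasis 1 * Ideal.Quotient.mk IC γ ∈ _
    have e : qBasis 1 * Ideal.Quotient.mk IC γ = qBasis 7 := by
      rw [show qBasis 1 = Ideal.Quotient.mk IC (α) from rfl,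
        show qBasis 7 = Ideal.Quotient.mk IC (α * γ) from rfl, ← map_mul]
      try exact congrArg _ (by ring)
    rw [e]; exact Submodule.subset_span (Set.mem_range_self _)
  · show qBasis 2 * Ideal.Quotient.mk IC γ ∈ _
    have e : qBasis 2 * Ideal.Quotient.mk IC γ = qBasis 8 := by
      rw [show qBasis 2 = Ideal.Quotient.mk IC (β) from rfl,
        show qBasis 8 = Ideal.Quotient.mk IC (β * γ) from rfl, ← map_mul]
      try exact congrArg _ (by ring)
    rw [e]; exact Submodule.subset_span (Set.mem_range_self _)
  · show qBasis 3 * Ideal.Quotient.mk IC γ ∈ _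
    have e : qBasis 3 * Ideal.Quotient.mk IC γ = Ideal.Quotient.mk IC (α ^ 2 * γ) := by
      rw [show qBasis 3 = Ideal.Quotient.mk IC (α ^ 2) from rfl, ← map_mul]
      try exact congrArg _ (by ring)
    rw [e, r_a2g]; exact (Submodule.smul_mem _ _ (Submodule.subset_span (Set.mem_range_self 8)))
  · show qBasis 4 * Ideal.Quotient.mk IC γ ∈ _
    have e : qBasis 4 * Ideal.Quotient.mk IC γ = qBasis 9 := by
      rw [show qBasis 4 = Ideal.Quotient.mk IC (γ) from rfl,
        show qBasis 9 = Ideal.Quotient.mk IC (γ ^ 2) from rfl, ← map_mul]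
      try exact congrArg _ (by ring)
    rw [e]; exact Submodule.subset_span (Set.mem_range_self _)
  · show qBasis 5 * Ideal.Quotient.mk IC γ ∈ _
    have e : qBasis 5 * Ideal.Quotient.mk IC γ = Ideal.Quotient.mk IC (α * β * γ) := by
      rw [show qBasis 5 = Ideal.Quotient.mk IC (α * β) from rfl, ← map_mul]
      try exact congrArg _ (by ring)
    rw [e, r_abg]; exact (Submodule.smul_mem _ _ (Submodule.subset_span (Set.mem_range_self 9)))
  · show qBasis 6 * Ideal.Quotient.mk IC γ ∈ _
    have e : qBasis 6 * Ideal.Quotient.mk IC γ = Ideal.Quotient.mk IC (β ^ 2 * γ) := by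
      rw [show qBasis 6 = Ideal.Quotient.mk IC (β ^ 2) from rfl, ← map_mul]
      try exact congrArg _ (by ring)
    rw [e, z_b2g]; exact Submodule.zero_mem _
  · show qBasis 7 * Ideal.Quotient.mk IC γ ∈ _
    have e : qBasis 7 * Ideal.Quotient.mk IC γ = Ideal.Quotient.mk IC (α * γ ^ 2) := by
      rw [show qBasis 7 = Ideal.Quotient.mk IC (α * γ) from rfl, ← map_mul]
      try exact congrArg _ (by ring)
    rw [e, z_ag2]; exact Submodule.zero_mem _
  · show qBasis 8 * Ideal.Quotient.mk IC γ ∈ _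
    have e : qBasis 8 * Ideal.Quotient.mk IC γ = Ideal.Quotient.mk IC (β * γ ^ 2) := by
      rw [show qBasis 8 = Ideal.Quotient.mk IC (β * γ) from rfl, ← map_mul]
      try exact congrArg _ (by ring)
    rw [e, z_bg2]; exact Submodule.zero_mem _
  · show qBasis 9 * Ideal.Quotient.mk IC γ ∈ _
    have e : qBasis 9 * Ideal.Quotient.mk IC γ = Ideal.Quotient.mk IC (γ ^ 3) := by
      rw [show qBasis 9 = Ideal.Quotient.mk IC (γ ^ 2) from rfl, ← map_mul]
      try exact congrArg _ (by ring)
    rw [e, z_g3]; exact Submodule.zero_mem _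

lemma span_top : Submodule.span ℂ (Set.range qBasis) = ⊤ := by
  rw [eq_top_iff]
  rintro x -
  obtain ⟨p, rfl⟩ := Ideal.Quotient.mk_surjective x
  induction p using MvPolynomial.induction_on with
  | C a =>
      have e : Ideal.Quotient.mk IC (C a) = a • qBasis 0 := by
        rw [show qBasis 0 = Ideal.Quotient.mk IC 1 from rfl, ← mk_smul, mul_one]
      rw [e]; exact Submodule.smul_mem _ _ (Submodule.subset_span (Set.mem_range_self 0))
  | add p q hp hq => rw [map_add]; exact Submodule.add_mem _ hp hq
  | mul_X p i hp =>
      rw [map_mul]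
      fin_cases i
      · exact closure0 _ hp
      · exact closure1 _ hp
      · exact closure2 _ hp


/-- The images of 1, α, β, α², γ, αβ, β², αγ, βγ, γ² form a ℂ-vector space basis of
    ℂ[α,β,γ]/I_C; in particular the quotient is 10-dimensional over ℂ. -/
theorem classical_quotient_basis :
    LinearIndependent ℂ qBasis ∧ Submodule.span ℂ (Set.range qBasis) = ⊤ ∧
      Module.finrank ℂ (MvPolynomial (Fin 3) ℂ ⧸ IC) = 10 := by
  refine ⟨indep, span_top, ?_⟩
  let b : Module.Basis (Fin 10) ℂ (MvPolynomial (Fin 3) ℂ ⧸ IC) := Module.Basis.mk indep span_top.ge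
  rw [Module.finrank_eq_card_basis b, Fintype.card_fin]
end
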